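/- Heat semigroup formula for the positive fractional power, weak form (Lemma 2.6(1)): for every s ∈ (0,1), every u ∈ D(L^s) and every w ∈ H, the function t ↦ (⟨e^{-tL} u, w⟩ − ⟨u, w⟩) t^{-1-s} is Lebesgue integrable on (0,∞) and ⟨L^{s} u, w⟩ = (1/Γ(−s)) ∫₀^∞ (⟨e^{-tL} u, w⟩ − ⟨u, w⟩) t^{-1-s} dt. -/

import Mathlib

/-- Domain of the fractional power `L^r`: those `u ∈ H` whose spectral coefficients
satisfy `∑ₖ λₖ^(2r) |⟨u, φₖ⟩|² < ∞`. -/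
def memDom {H : Type*} [NormedAddCommGroup H] [InnerProductSpace ℝ H]
    (φ : ℕ → H) (lam : ℕ → ℝ) (r : ℝ) (u : H) : Prop :=
  Summable fun k => lam k ^ (2 * r) * (inner ℝ u (φ k) : ℝ) ^ 2

/-- The fractional power `L^r u = ∑ₖ λₖ^r ⟨u, φₖ⟩ φₖ`. -/
noncomputable def Lpow {H : Type*} [NormedAddCommGroup H] [InnerProductSpace ℝ H]
    (φ : ℕ → H) (lam : ℕ → ℝ) (r : ℝ) (u : H) : H :=
  ∑' k, (lam k ^ r * (inner ℝ u (φ k) : ℝ)) • φ k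

/-- The heat semigroup `e^{-tL} u = ∑ₖ e^{-tλₖ} ⟨u, φₖ⟩ φₖ`. -/
noncomputable def heatSG {H : Type*} [NormedAddCommGroup H] [InnerProductSpace ℝ H]
    (φ : ℕ → H) (lam : ℕ → ℝ) (t : ℝ) (u : H) : H :=
  ∑' k, (Real.exp (-t * lam k) * (inner ℝ u (φ k) : ℝ)) • φ k

/-!
Write `aₖ = ⟨u, φₖ⟩` and `cₖ = ⟨φₖ, w⟩`. Expanding in the basis,
`(⟨e^{-tL}u, w⟩ - ⟨u, w⟩) t^{-1-s} = ∑ₖ (e^{-λₖt} - 1) t^{-1-s} aₖ cₖ`, and each term integrates to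
`Γ(-s) λₖ^s aₖ cₖ`, by the scalar identity `∫₀^∞ (e^{-λt} - 1) t^{-1-s} dt = Γ(-s) λ^s` (integration
by parts against `t^{-s}` for `λ = 1`, then scaling). The kernel has constant sign, so the integrals
of the absolute values of the terms are `-Γ(-s) λₖ^s |aₖ cₖ|`, which is summable by Cauchy–Schwarz
because `u ∈ D(L^s)`. Summing term by term gives integrability and
`∫ = Γ(-s) ∑ₖ λₖ^s aₖ cₖ = Γ(-s) ⟨L^s u, w⟩`.
-/

open MeasureTheory Filter Topology Set Real

theorem integrable_and_hasSum_integral_of_hasSum {α E ι : Type*} [MeasurableSpace α]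
    {μ : Measure α} [NormedAddCommGroup E] [NormedSpace ℝ E] [Countable ι]
    {F : ι → α → E} {f : α → E}
    (hF_int : ∀ i, Integrable (F i) μ) (hF_sum : Summable fun i ↦ ∫ a, ‖F i a‖ ∂μ)
    (hf : ∀ᵐ a ∂μ, HasSum (fun i ↦ F i a) (f a)) :
    Integrable f μ ∧ HasSum (fun i ↦ ∫ a, F i a ∂μ) (∫ a, f a ∂μ) := by
  refine ⟨⟨aestronglyMeasurable_of_tendsto_ae atTop
    (fun n ↦ Finset.aestronglyMeasurable_fun_sum n fun i _ ↦ (hF_int i).1) hf, ?_⟩, ?_⟩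
  · calc ∫⁻ a, ‖f a‖ₑ ∂μ ≤ ∫⁻ a, ∑' i, ‖F i a‖ₑ ∂μ := by
          refine lintegral_mono_ae ?_
          filter_upwards [hf] with a ha
          exact ha.tsum_eq ▸ enorm_tsum_le_tsum_enorm
      _ = ∑' i, ENNReal.ofReal (∫ a, ‖F i a‖ ∂μ) := by
          rw [lintegral_tsum fun i ↦ (hF_int i).1.enorm]
          exact tsum_congr fun i ↦ (ofReal_integral_norm_eq_lintegral_enorm (hF_int i)).symm
      _ < ⊤ := by
          rw [← ENNReal.ofReal_tsum_of_nonneg (fun i ↦ integral_nonneg fun a ↦ norm_nonneg _)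
            hF_sum]
          exact ENNReal.ofReal_lt_top
  · rw [integral_congr_ae (hf.mono fun a ha ↦ ha.tsum_eq.symm)]
    exact hasSum_integral_of_summable_integral_norm hF_int hF_sum

theorem summable_abs_mul_of_summable_sq {ι : Type*} {x y : ι → ℝ} (hx : Summable fun k ↦ x k ^ 2)
    (hy : Summable fun k ↦ y k ^ 2) : Summable fun k ↦ |x k * y k| :=
  ((hx.add hy).div_const 2).of_nonneg_of_le (fun k ↦ abs_nonneg _) fun k ↦ by
    rw [abs_mul]
    nlinarith [sq_nonneg (|x k| - |y k|), sq_abs (x k), sq_abs (y k)]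

theorem abs_exp_neg_sub_one_le {x : ℝ} (hx : 0 ≤ x) : |exp (-x) - 1| ≤ min x 1 := by
  have h1 : exp (-x) ≤ 1 := exp_le_one_iff.2 (neg_nonpos.2 hx)
  rw [abs_sub_comm, abs_of_nonneg (sub_nonneg.2 h1)]
  exact le_min (by linarith [add_one_le_exp (-x)]) (by linarith [exp_pos (-x)])

theorem exp_neg_sub_one_nonpos {x : ℝ} (hx : 0 ≤ x) : exp (-x) - 1 ≤ 0 :=
  sub_nonpos.2 (exp_le_one_iff.2 (neg_nonpos.2 hx))

section

variable {s : ℝ}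

theorem integrableOn_exp_neg_mul_sub_one_mul_rpow {l : ℝ} (hl : 0 < l) (hs0 : 0 < s) (hs1 : s < 1) :
    IntegrableOn (fun t ↦ (exp (-(l * t)) - 1) * t ^ (-1 - s)) (Ioi 0) := by
  have hmeas : AEStronglyMeasurable (fun t ↦ (exp (-(l * t)) - 1) * t ^ (-1 - s))
      (volume.restrict (Ioi 0)) :=
    (ContinuousOn.mul (by fun_prop) fun t ht ↦
      (continuousAt_rpow_const t _ (Or.inl (ne_of_gt ht))).continuousWithinAt).aestronglyMeasurable
      measurableSet_Ioi
  have hbound : ∀ t ∈ Ioi (0 : ℝ), ‖(exp (-(l * t)) - 1) * t ^ (-1 - s)‖ ≤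
      min (l * t ^ (-s)) (t ^ (-1 - s)) := by
    intro t (ht : 0 < t)
    have hr : 0 ≤ t ^ (-1 - s) := rpow_nonneg ht.le _
    have hlt : l * t * t ^ (-1 - s) = l * t ^ (-s) := by
      rw [mul_assoc, ← rpow_one_add' ht.le (by linarith)]; ring_nf
    rw [norm_mul, norm_of_nonneg hr, ← hlt]
    have := abs_exp_neg_sub_one_le (mul_pos hl ht).le
    refine le_min ?_ ?_
    · exact mul_le_mul_of_nonneg_right (this.trans (min_le_left _ _)) hr
    · simpa using mul_le_mul_of_nonneg_right (this.trans (min_le_right _ _)) hr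
  rw [← Ioc_union_Ioi_eq_Ioi zero_le_one]
  refine IntegrableOn.union ?_ ?_
  · have hint : IntegrableOn (fun t : ℝ ↦ l * t ^ (-s)) (Ioc 0 1) :=
      ((intervalIntegral.intervalIntegrable_rpow' (by linarith : (-1 : ℝ) < -s)).1).const_mul l
    refine hint.mono' (hmeas.mono_set Ioc_subset_Ioi_self) ?_
    filter_upwards [ae_restrict_mem measurableSet_Ioc] with t ht
    exact (hbound t ht.1).trans (min_le_left _ _)
  · have hint : IntegrableOn (fun t : ℝ ↦ t ^ (-1 - s)) (Ioi 1) :=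
      integrableOn_Ioi_rpow_of_lt (by linarith) one_pos
    refine hint.mono' (hmeas.mono_set (Ioi_subset_Ioi zero_le_one)) ?_
    filter_upwards [ae_restrict_mem measurableSet_Ioi] with t (ht : 1 < t)
    exact (hbound t (zero_lt_one.trans ht)).trans (min_le_right _ _)

theorem continuousWithinAt_exp_neg_sub_one_mul_rpow_neg (hs1 : s < 1) :
    ContinuousWithinAt (fun t ↦ (exp (-t) - 1) * t ^ (-s)) (Ici 0) 0 := by
  have hlim : Tendsto (fun t : ℝ ↦ t ^ (1 - s)) (𝓝[Ici 0] 0) (𝓝 0) := by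
    simpa [ContinuousWithinAt, zero_rpow (by linarith : 1 - s ≠ 0)] using
      (continuousAt_rpow_const 0 (1 - s) (Or.inr (by linarith))).continuousWithinAt (s := Ici 0)
  rw [ContinuousWithinAt, neg_zero, exp_zero, sub_self, zero_mul]
  refine squeeze_zero_norm' ?_ hlim
  filter_upwards [self_mem_nhdsWithin] with t (ht : 0 ≤ t)
  rcases ht.eq_or_lt with rfl | ht
  · simp [zero_rpow (by linarith : 1 - s ≠ 0)]
  calc ‖(exp (-t) - 1) * t ^ (-s)‖ = |exp (-t) - 1| * t ^ (-s) := by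
        rw [norm_mul, Real.norm_eq_abs, norm_of_nonneg (rpow_nonneg ht.le _)]
    _ ≤ t * t ^ (-s) := mul_le_mul_of_nonneg_right
        ((abs_exp_neg_sub_one_le ht.le).trans (min_le_left _ _)) (rpow_nonneg ht.le _)
    _ = t ^ (1 - s) := by rw [← rpow_one_add' ht.le (by linarith), ← sub_eq_add_neg]

theorem integral_exp_neg_sub_one_mul_rpow (hs0 : 0 < s) (hs1 : s < 1) :
    ∫ t in Ioi (0 : ℝ), (exp (-t) - 1) * t ^ (-1 - s) = Gamma (-s) := by
  set F : ℝ → ℝ := fun t ↦ (exp (-t) - 1) * t ^ (-s) / -s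
  set g : ℝ → ℝ := fun t ↦ exp (-t) * t ^ (-s) / s
  set f : ℝ → ℝ := fun t ↦ (exp (-t) - 1) * t ^ (-1 - s)
  have hg_int : IntegrableOn g (Ioi 0) := by
    simpa [g, sub_eq_add_neg, IntegrableOn] using
      (GammaIntegral_convergent (by linarith : 0 < 1 - s)).div_const s
  have hf_int : IntegrableOn f (Ioi 0) := by
    simpa [f] using integrableOn_exp_neg_mul_sub_one_mul_rpow one_pos hs0 hs1
  have hderiv : ∀ t ∈ Ioi (0 : ℝ), HasDerivAt F (g t + f t) t := by
    intro t (ht : 0 < t)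
    have h1 : HasDerivAt (fun t ↦ exp (-t) - 1) (-exp (-t)) t := by
      simpa using ((hasDerivAt_neg t).exp).sub_const 1
    refine ((h1.mul (hasDerivAt_rpow_const (Or.inl ht.ne'))).div_const (-s)).congr_deriv ?_
    simp only [g, f, show -s - 1 = -1 - s by ring]
    field_simp
    ring
  have htop : Tendsto F atTop (𝓝 0) := by
    have h1 : Tendsto (fun t : ℝ ↦ exp (-t) - 1) atTop (𝓝 (-1)) := by
      simpa using (tendsto_exp_atBot.comp tendsto_neg_atTop_atBot).sub_const 1
    simpa using (h1.mul (tendsto_rpow_neg_atTop hs0)).div_const (-s)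
  have hIBP := integral_Ioi_of_hasDerivAt_of_tendsto
    ((continuousWithinAt_exp_neg_sub_one_mul_rpow_neg hs1).div_const (-s)) hderiv
    (hg_int.add hf_int) htop
  have hg_val : ∫ t in Ioi (0 : ℝ), g t = Gamma (1 - s) / s := by
    rw [Gamma_eq_integral (by linarith), ← integral_div]
    refine setIntegral_congr_fun measurableSet_Ioi fun t _ ↦ ?_
    simp [g, sub_eq_add_neg]
  have hGamma : Gamma (1 - s) = -s * Gamma (-s) := by
    simpa [show -s + 1 = 1 - s by ring] using Gamma_add_one (neg_ne_zero.2 hs0.ne')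
  rw [integral_add hg_int hf_int, hg_val, hGamma, neg_mul, neg_div, mul_div_cancel_left₀ _ hs0.ne',
    neg_zero, exp_zero, sub_self, zero_mul, zero_div, sub_zero] at hIBP
  linarith

theorem integral_exp_neg_mul_sub_one_mul_rpow {l : ℝ} (hl : 0 < l) (hs0 : 0 < s) (hs1 : s < 1) :
    ∫ t in Ioi (0 : ℝ), (exp (-(l * t)) - 1) * t ^ (-1 - s) = Gamma (-s) * l ^ s := by
  have hscale : ∀ t ∈ Ioi (0 : ℝ), (exp (-(l * t)) - 1) * t ^ (-1 - s) =
      l ^ (1 + s) * ((exp (-(l * t)) - 1) * (l * t) ^ (-1 - s)) := by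
    intro t (ht : 0 < t)
    rw [mul_rpow hl.le ht.le, mul_left_comm, ← mul_assoc (l ^ (1 + s)), ← rpow_add hl]
    simp
  rw [setIntegral_congr_fun measurableSet_Ioi hscale, integral_const_mul,
    integral_comp_mul_left_Ioi (fun x ↦ (exp (-x) - 1) * x ^ (-1 - s)) 0 hl, mul_zero,
    integral_exp_neg_sub_one_mul_rpow hs0 hs1, smul_eq_mul, rpow_one_add' hl.le (by linarith)]
  field_simp

theorem integral_norm_exp_neg_mul_sub_one_mul_rpow {l : ℝ} (hl : 0 < l) (hs0 : 0 < s)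
    (hs1 : s < 1) :
    ∫ t in Ioi (0 : ℝ), ‖(exp (-(l * t)) - 1) * t ^ (-1 - s)‖ = -(Gamma (-s) * l ^ s) := by
  rw [← integral_exp_neg_mul_sub_one_mul_rpow hl hs0 hs1, ← integral_neg]
  refine setIntegral_congr_fun measurableSet_Ioi fun t (ht : 0 < t) ↦ ?_
  exact norm_of_nonpos (mul_nonpos_of_nonpos_of_nonneg
    (exp_neg_sub_one_nonpos (mul_pos hl ht).le) (rpow_nonneg ht.le _))

theorem Gamma_neg_lt_zero (hs0 : 0 < s) (hs1 : s < 1) : Gamma (-s) < 0 := by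
  have h := Gamma_add_one (neg_ne_zero.2 hs0.ne')
  have hpos := Gamma_pos_of_pos (by linarith : 0 < -s + 1)
  nlinarith

end

section Spectral

variable {H : Type*} [NormedAddCommGroup H] [InnerProductSpace ℝ H] {lam : ℕ → ℝ}

theorem Orthonormal.hasSum_inner_tsum_smul [CompleteSpace H] {ι : Type*} {φ : ι → H}
    (hφ : Orthonormal ℝ φ) {c : ι → ℝ} (hc : Summable fun k ↦ c k ^ 2) (w : H) :
    HasSum (fun k ↦ c k * inner ℝ (φ k) w) (inner ℝ (∑' k, c k • φ k) w) := by
  have hsum : Summable fun k ↦ c k • φ k := by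
    simpa using (hφ.orthogonalFamily.summable_iff_norm_sq_summable c).2 (by simpa using hc)
  simpa [real_inner_smul_right, real_inner_comm w] using (innerSL ℝ w).hasSum hsum.hasSum

theorem Orthonormal.summable_inner_sq {ι : Type*} {φ : ι → H} (hφ : Orthonormal ℝ φ) (u : H) :
    Summable fun k ↦ inner ℝ u (φ k) ^ 2 := by
  simpa [real_inner_comm u] using hφ.inner_products_summable (x := u)

theorem memDom.summable_rpow_mul_inner_sq {s : ℝ} {φ : ℕ → H} {u : H} (hlam : ∀ k, 0 ≤ lam k)
    (hu : memDom φ lam s u) : Summable fun k ↦ (lam k ^ s * inner ℝ u (φ k)) ^ 2 :=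
  hu.congr fun k ↦ by rw [mul_pow, ← rpow_mul_natCast (hlam k)]; norm_num [mul_comm]

theorem summable_rpow_mul_abs_inner_mul_inner (hφ : Orthonormal ℝ φ) (hlam : ∀ k, 0 ≤ lam k)
    {s : ℝ} {u : H} (hu : memDom φ lam s u) (w : H) :
    Summable fun k ↦ lam k ^ s * |inner ℝ u (φ k) * inner ℝ (φ k) w| := by
  have h := summable_abs_mul_of_summable_sq (hu.summable_rpow_mul_inner_sq hlam)
    (by simpa only [real_inner_comm w] using hφ.summable_inner_sq w)
  simpa only [← mul_assoc, abs_mul, abs_of_nonneg (rpow_nonneg (hlam _) s), real_inner_comm w]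
    using h

variable [CompleteSpace H] {φ : ℕ → H}

theorem hasSum_inner_heatSG (hφ : Orthonormal ℝ φ) (hlam : ∀ k, 0 ≤ lam k) {t : ℝ} (ht : 0 ≤ t)
    (u w : H) :
    HasSum (fun k ↦ exp (-t * lam k) * (inner ℝ u (φ k) * inner ℝ (φ k) w))
      (inner ℝ (heatSG φ lam t u) w) := by
  simp_rw [← mul_assoc]
  refine hφ.hasSum_inner_tsum_smul ((hφ.summable_inner_sq u).of_nonneg_of_le
    (fun k ↦ sq_nonneg _) fun k ↦ ?_) w
  have h0 : exp (-t * lam k) ≤ 1 := exp_le_one_iff.2 (by nlinarith [hlam k])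
  rw [mul_pow]
  exact mul_le_of_le_one_left (sq_nonneg _) (pow_le_one₀ (exp_pos _).le h0)

theorem hasSum_inner_Lpow (hφ : Orthonormal ℝ φ) (hlam : ∀ k, 0 ≤ lam k) {s : ℝ} {u : H}
    (hu : memDom φ lam s u) (w : H) :
    HasSum (fun k ↦ lam k ^ s * (inner ℝ u (φ k) * inner ℝ (φ k) w))
      (inner ℝ (Lpow φ lam s u) w) := by
  simp_rw [← mul_assoc]
  exact hφ.hasSum_inner_tsum_smul (hu.summable_rpow_mul_inner_sq hlam) w

theorem HilbertBasis.hasSum_inner_heatSG_sub_inner (hb : HilbertBasis ℕ ℝ H)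
    (hlam : ∀ k, 0 ≤ lam k) {t : ℝ} (ht : 0 ≤ t) (u w : H) :
    HasSum (fun k ↦ (exp (-(lam k * t)) - 1) * (inner ℝ u (hb k) * inner ℝ (hb k) w))
      (inner ℝ (heatSG hb lam t u) w - inner ℝ u w) := by
  refine ((hasSum_inner_heatSG hb.orthonormal hlam ht u w).sub
    (hb.hasSum_inner_mul_inner u w)).congr_fun fun k ↦ ?_
  rw [show -(lam k * t) = -t * lam k by ring]
  ring

end Spectral

/-- Heat semigroup representation of the positive fractional power, weak form
(Lemma 2.6(1)): for `s ∈ (0,1)`, `u ∈ D(L^s)` and `w ∈ H`, the function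
`t ↦ (⟨e^{-tL}u, w⟩ - ⟨u, w⟩) t^{-1-s}` is integrable on `(0,∞)` and
`⟨L^s u, w⟩ = (1/Γ(-s)) ∫₀^∞ (⟨e^{-tL}u, w⟩ - ⟨u, w⟩) t^{-1-s} dt`. -/
theorem inner_Lpow_eq_heat_integral
    {H : Type*} [NormedAddCommGroup H] [InnerProductSpace ℝ H] [CompleteSpace H]
    (hb : HilbertBasis ℕ ℝ H) (lam : ℕ → ℝ)
    (hpos : 0 < lam 0) (hle : ∀ k, lam 0 ≤ lam k)
    (s : ℝ) (hs0 : 0 < s) (hs1 : s < 1)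
    (u : H) (hu : memDom (⇑hb) lam s u) (w : H) :
    IntegrableOn
      (fun t : ℝ => ((inner ℝ (heatSG (⇑hb) lam t u) w : ℝ) - (inner ℝ u w : ℝ)) * t ^ (-1 - s))
      (Set.Ioi 0) ∧
    (inner ℝ (Lpow (⇑hb) lam s u) w : ℝ) = (1 / Real.Gamma (-s)) *
      ∫ t in Set.Ioi (0 : ℝ),
        ((inner ℝ (heatSG (⇑hb) lam t u) w : ℝ) - (inner ℝ u w : ℝ)) * t ^ (-1 - s) := by
  have hlam_pos : ∀ k, 0 < lam k := fun k ↦ hpos.trans_le (hle k)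
  have hlam : ∀ k, 0 ≤ lam k := fun k ↦ (hlam_pos k).le
  set b : ℕ → ℝ := fun k ↦ inner ℝ u (hb k) * inner ℝ (hb k) w
  set G : ℕ → ℝ → ℝ := fun k t ↦ (exp (-(lam k * t)) - 1) * t ^ (-1 - s) * b k
  have hG_int : ∀ k, IntegrableOn (G k) (Ioi 0) := fun k ↦
    (integrableOn_exp_neg_mul_sub_one_mul_rpow (hlam_pos k) hs0 hs1).mul_const _
  have hG_norm : Summable fun k ↦ ∫ t in Ioi 0, ‖G k t‖ := by
    refine ((summable_rpow_mul_abs_inner_mul_inner hb.orthonormal hlam hu w).mul_left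
      (-Gamma (-s))).congr fun k ↦ ?_
    simp only [G, norm_mul _ (b k), integral_mul_const]
    rw [integral_norm_exp_neg_mul_sub_one_mul_rpow (hlam_pos k) hs0 hs1, Real.norm_eq_abs]
    ring
  have hG_sum : ∀ᵐ t ∂volume.restrict (Ioi 0), HasSum (fun k ↦ G k t)
      ((inner ℝ (heatSG hb lam t u) w - inner ℝ u w) * t ^ (-1 - s)) := by
    filter_upwards [ae_restrict_mem measurableSet_Ioi] with t (ht : 0 < t)
    refine ((hb.hasSum_inner_heatSG_sub_inner hlam ht.le u w).mul_right _).congr_fun fun k ↦ ?_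
    ring
  obtain ⟨hint, hsum⟩ := integrable_and_hasSum_integral_of_hasSum hG_int hG_norm hG_sum
  refine ⟨hint, ?_⟩
  have hG_integral : ∀ k, ∫ t in Ioi 0, G k t = Gamma (-s) * (lam k ^ s * b k) := fun k ↦ by
    simp only [G, integral_mul_const, integral_exp_neg_mul_sub_one_mul_rpow (hlam_pos k) hs0 hs1]
    ring
  rw [hsum.unique (((hasSum_inner_Lpow hb.orthonormal hlam hu w).mul_left (Gamma (-s))).congr_fun
    fun k ↦ hG_integral k), one_div, inv_mul_cancel_left₀ (Gamma_neg_lt_zero hs0 hs1).ne]
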